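/- arXiv:2301.13125 — 4 statements merged into one kernel-verified Lean document; each statement's English description precedes it below -/
import Mathlib

section
/- Let G be a group generated by two elements x, y with y^n = 1 and x * y * x⁻¹ = y^l. Then the commutator subgroup (derived subgroup) of G equals the cyclic subgroup generated by y^(gcd(n, l-1)). -/
open scoped commutatorElement

theorem derived_subgroup_metacyclic {G : Type*} [Group G] (x y : G) (n l : ℕ)
    (hn : 1 ≤ n) (hcop : Nat.Coprime l n)
    (hgen : Subgroup.closure ({x, y} : Set G) = ⊤)
    (hyn : y ^ n = 1) (hconj : x * y * x⁻¹ = y ^ l) :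
    commutator G = Subgroup.zpowers (y ^ Nat.gcd n (l - 1)) := by
  set d := Nat.gcd n (l - 1) with hd
  set H := Subgroup.zpowers (y ^ d) with hH
  -- integer-exponent facts
  have hper : ∀ m k : ℤ, (n : ℤ) ∣ (m - k) → y ^ m = y ^ k := by
    rintro m k ⟨c, hc⟩
    have hm : m = k + (n : ℤ) * c := by linarith
    rw [hm, zpow_add, zpow_mul, zpow_natCast, hyn, one_zpow, mul_one]
  have hconjz : ∀ m : ℤ, x * y ^ m * x⁻¹ = y ^ ((l : ℤ) * m) := by
    intro m
    rw [zpow_mul, zpow_natCast, ← hconj, conj_zpow]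
  have hpow : ∀ k : ℤ, (y ^ d) ^ k = y ^ ((d : ℤ) * k) := by
    intro k; rw [← zpow_natCast y d, ← zpow_mul]
  have hmem : ∀ m : ℤ, (d : ℤ) ∣ m → y ^ m ∈ H := by
    rintro m ⟨c, rfl⟩
    exact ⟨c, hpow c⟩
  have hkey : ⁅x, y⁆ = y ^ ((l : ℤ) - 1) := by
    rw [commutatorElement_def, hconj, sub_eq_add_neg, zpow_add, zpow_natCast, zpow_neg_one]
  have hdvd : (d : ℤ) ∣ (l : ℤ) - 1 := by
    rcases Nat.eq_zero_or_pos l with hl | hl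
    · subst hl
      have hn1 : n = 1 := (Nat.coprime_zero_left n).mp hcop
      have : d = 1 := by simp [hd, hn1]
      rw [this]; exact one_dvd _
    · have hcast : ((l - 1 : ℕ) : ℤ) = (l : ℤ) - 1 := by
        push_cast [hl]; ring
      rw [← hcast]
      exact_mod_cast Nat.gcd_dvd_right n (l - 1)
  -- forward inclusion: H ≤ commutator G
  have hc1 : y ^ ((l : ℤ) - 1) ∈ commutator G := by
    rw [← hkey, commutator_def]
    exact Subgroup.commutator_mem_commutator (Subgroup.mem_top x) (Subgroup.mem_top y)
  have hyd : y ^ ((d : ℕ) : ℤ) ∈ commutator G := by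
    rcases Nat.eq_zero_or_pos l with hl | hl
    · have hn1 : n = 1 := (Nat.coprime_zero_left n).mp (hl ▸ hcop)
      have hy1 : y = 1 := by rw [← pow_one y, ← hn1, hyn]
      simp only [hy1, one_zpow]
      exact Subgroup.one_mem _
    · have hcast : ((l - 1 : ℕ) : ℤ) = (l : ℤ) - 1 := by push_cast [hl]; ring
      have hbez := Nat.gcd_eq_gcd_ab n (l - 1)
      have hdz : ((d : ℕ) : ℤ) = (n : ℤ) * Nat.gcdA n (l - 1) + ((l : ℤ) - 1) * Nat.gcdB n (l - 1) := by
        rw [← hcast]; exact_mod_cast hbez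
      rw [hdz, zpow_add, zpow_mul, zpow_natCast, hyn, one_zpow, one_mul, zpow_mul]
      exact Subgroup.zpow_mem _ hc1 _
  -- normality of H
  have hxnorm : x ∈ Subgroup.normalizer (H : Set G) := by
    rw [Subgroup.mem_normalizer_iff]
    obtain ⟨a, b, hab⟩ : ∃ a b : ℤ, (1 : ℤ) = (l : ℤ) * a + (n : ℤ) * b := by
      have := Nat.gcd_eq_gcd_ab l n
      rw [hcop] at this
      exact ⟨_, _, by exact_mod_cast this⟩
    intro h
    constructor
    · intro hh
      obtain ⟨k, hk⟩ := Subgroup.mem_zpowers_iff.mp hh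
      rw [← hk, hpow, hconjz]
      exact hmem _ ⟨(l : ℤ) * k, by ring⟩
    · intro hh
      obtain ⟨k, hk⟩ := Subgroup.mem_zpowers_iff.mp hh
      rw [hpow] at hk
      set m : ℤ := (d : ℤ) * k with hm
      have hh2 : h = x⁻¹ * y ^ m * x := by rw [hk]; group
      have e2 : x * y ^ (m * a) * x⁻¹ = y ^ ((l : ℤ) * (m * a)) := hconjz _
      have e3 : y ^ ((l : ℤ) * (m * a)) = y ^ m :=
        hper _ _ ⟨-(m * b), by linear_combination (-m) * hab⟩
      have hfin : h = y ^ (m * a) := by rw [hh2, ← e3, ← e2]; group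
      rw [hfin]
      exact hmem _ ⟨k * a, by ring⟩
  have hynorm : y ∈ Subgroup.normalizer (H : Set G) := by
    rw [Subgroup.mem_normalizer_iff]
    intro h
    constructor
    · intro hh
      obtain ⟨k, hk⟩ := Subgroup.mem_zpowers_iff.mp hh
      have c : Commute y ((y ^ d) ^ k) := ((Commute.refl y).pow_right d).zpow_right k
      rw [← hk, c.eq, mul_inv_cancel_right]
      exact Subgroup.zpow_mem _ (Subgroup.mem_zpowers _) k
    · intro hh
      obtain ⟨k, hk⟩ := Subgroup.mem_zpowers_iff.mp hh
      have c : Commute y⁻¹ ((y ^ d) ^ k) :=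
        (((Commute.refl y).pow_right d).zpow_right k).inv_left
      have hfin : h = y⁻¹ * (y ^ d) ^ k * y := by rw [hk]; group
      rw [hfin, c.eq, inv_mul_cancel_right]
      exact Subgroup.zpow_mem _ (Subgroup.mem_zpowers _) k
  have hnorm : H.Normal := by
    rw [← Subgroup.normalizer_eq_top_iff, ← top_le_iff, ← hgen, Subgroup.closure_le]
    intro g hg
    simp only [Set.mem_insert_iff, Set.mem_singleton_iff] at hg
    rcases hg with rfl | rfl
    · exact hxnorm
    · exact hynorm
  letI := hnorm
  -- quotient is abelian
  set f := QuotientGroup.mk' H with hf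
  have hQgen : Subgroup.closure ({f x, f y} : Set (G ⧸ H)) = ⊤ := by
    rw [← Set.image_pair, ← MonoidHom.map_closure, hgen]
    exact Subgroup.map_top_of_surjective f (QuotientGroup.mk'_surjective H)
  have hxyQ : Commute (f x) (f y) := by
    have h1 : f ⁅x, y⁆ = 1 := by
      rw [QuotientGroup.mk'_apply, QuotientGroup.eq_one_iff, hkey]
      exact hmem _ hdvd
    rw [map_commutatorElement] at h1
    exact commutatorElement_eq_one_iff_commute.mp h1
  have habQ : ∀ a b : G ⧸ H, Commute a b := by
    have hgen' : ∀ a : G ⧸ H, a ∈ Subgroup.closure ({f x, f y} : Set (G ⧸ H)) := by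
      rw [hQgen]; exact fun a => Subgroup.mem_top a
    intro a b
    refine Subgroup.closure_induction₂ (p := fun a b _ _ => Commute a b) ?_
      (fun u _ => Commute.one_left u) (fun u _ => Commute.one_right u)
      (fun u v w _ _ _ h1 h2 => h1.mul_left h2)
      (fun u v w _ _ _ h1 h2 => h1.mul_right h2)
      (fun u v _ _ h => h.inv_left) (fun u v _ _ h => h.inv_right)
      (hgen' a) (hgen' b)
    rintro u v (rfl | rfl) (rfl | rfl)
    · exact Commute.refl _
    · exact hxyQ
    · exact hxyQ.symm
    · exact Commute.refl _
  apply le_antisymm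
  · rw [commutator_def, Subgroup.commutator_le]
    intro g1 _ g2 _
    rw [← QuotientGroup.eq_one_iff]
    have : ((⁅g1, g2⁆ : G) : G ⧸ H) = f ⁅g1, g2⁆ := rfl
    rw [this, map_commutatorElement]
    exact commutatorElement_eq_one_iff_commute.mpr (habQ _ _)
  · rw [Subgroup.zpowers_le]
    exact (zpow_natCast y d) ▸ hyd
end

section
/- Let G be a group (or any monoid), a ∈ G, and n, l natural numbers with n odd. If a^((l-1)^3) = 1, a^(l^2 - 1) = 1, and a^n = 1 (with l ≥ 1), then a^(gcd(n, l-1)) = 1. -/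
theorem pow_gcd_eq_one_of_odd {G : Type*} [Group G] (a : G) (n l : ℕ)
    (hl : 1 ≤ l) (hn : Odd n)
    (h1 : a ^ ((l - 1) ^ 3) = 1) (h2 : a ^ (l ^ 2 - 1) = 1) (h3 : a ^ n = 1) :
    a ^ Nat.gcd n (l - 1) = 1 := by
  obtain ⟨k, rfl⟩ := Nat.exists_eq_add_of_le hl
  simp only [Nat.add_sub_cancel_left] at *
  have hsq : (1 + k) ^ 2 - 1 = k * (k + 2) := by ring_nf; omega
  rw [hsq] at h2
  set d := orderOf a with hd
  have hd1 : d ∣ k ^ 3 := orderOf_dvd_of_pow_eq_one h1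
  have hd2 : d ∣ k * (k + 2) := orderOf_dvd_of_pow_eq_one h2
  have hd3 : d ∣ n := orderOf_dvd_of_pow_eq_one h3
  have hdodd : Odd d := hn.of_dvd_nat hd3
  have hdg : d ∣ k * Nat.gcd (k ^ 2) (k + 2) := by
    rw [← Nat.gcd_mul_left]
    exact Nat.dvd_gcd (by simpa [pow_succ, pow_two, mul_comm, mul_assoc] using hd1) hd2
  have hg4 : Nat.gcd (k ^ 2) (k + 2) ∣ 4 := by
    set g := Nat.gcd (k ^ 2) (k + 2) with hg
    have h1' : g ∣ k ^ 2 := Nat.gcd_dvd_left _ _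
    have h2' : g ∣ k + 2 := Nat.gcd_dvd_right _ _
    have h3' : g ∣ (k + 2) ^ 2 := h2'.mul_right _ |>.trans (by rw [pow_two])
    have h4' : g ∣ 4 * k + 4 := by
      have := Nat.dvd_sub h3' h1'
      have he : (k + 2) ^ 2 - k ^ 2 = 4 * k + 4 := by ring_nf; omega
      rwa [he] at this
    have h5' : g ∣ 4 * (k + 2) := h2'.mul_left _
    have := Nat.dvd_sub h5' h4'
    have he : 4 * (k + 2) - (4 * k + 4) = 4 := by ring_nf; omega
    rwa [he] at this
  have hdk4 : d ∣ 4 * k := by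
    refine hdg.trans ?_
    rw [mul_comm]
    exact Nat.mul_dvd_mul_right hg4 k
  have hcop : Nat.Coprime d 4 := by
    have h2 : Nat.Coprime d 2 := by
      exact hdodd.coprime_two_right
    simpa using Nat.Coprime.mul_right h2 h2
  have hdk : d ∣ k := (Nat.Coprime.dvd_of_dvd_mul_left hcop hdk4)
  exact orderOf_dvd_iff_pow_eq_one.mp (Nat.dvd_gcd hd3 hdk)
end

section
/- Let G be a group generated by x and y with x^m = 1, y^n = 1, x * y * x⁻¹ = y^l, and l^m ≡ 1 (mod n). Then the abelianization G/[G,G] is isomorphic to ZMod m × ZMod (gcd n (l-1)). -/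
open SemidirectProduct Multiplicative

theorem abelianization_split_metacyclic (m n l : ℕ) (hm : 0 < m) (hn : 0 < n)
    (hmod : l ^ m ≡ 1 [MOD n])
    (φ : Multiplicative (ZMod m) →* MulAut (Multiplicative (ZMod n)))
    (hφ : ∀ (j : ZMod m) (a : ZMod n),
      φ (Multiplicative.ofAdd j) (Multiplicative.ofAdd a)
        = Multiplicative.ofAdd ((l : ZMod n) ^ j.val * a)) :
    Nonempty
      (Abelianization (SemidirectProduct (Multiplicative (ZMod n)) (Multiplicative (ZMod m)) φ)
        ≃* Multiplicative (ZMod m) × Multiplicative (ZMod (Nat.gcd n (l - 1)))) := by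
  classical
  haveI : NeZero n := ⟨hn.ne'⟩
  set d := Nat.gcd n (l - 1) with hd
  have hdvd : d ∣ n := Nat.gcd_dvd_left _ _
  have hdl : d ∣ l - 1 := Nat.gcd_dvd_right _ _
  have hdpos : 0 < d := Nat.gcd_pos_of_pos_left _ hn
  haveI : NeZero d := ⟨hdpos.ne'⟩
  have hlm : (l : ZMod n) ^ m = 1 := by
    have h := (ZMod.natCast_eq_natCast_iff _ _ _).mpr hmod
    push_cast at h
    exact h
  have hl0 : l = 0 → n = 1 := by
    intro h0
    subst h0
    rw [Nat.zero_pow hm] at hmod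
    have h : n ∣ 1 := by simpa using (Nat.modEq_iff_dvd' (by norm_num)).mp hmod
    exact Nat.dvd_one.mp h
  have hl1 : (l : ZMod d) = 1 := by
    rcases Nat.eq_zero_or_pos l with h0 | hl
    · have hd1 : d = 1 := Nat.dvd_one.mp ((hl0 h0) ▸ hdvd)
      rw [hd1] at *
      exact Subsingleton.elim _ _
    · have h1 : ((l - 1 : ℕ) : ZMod d) = 0 := (ZMod.natCast_eq_zero_iff _ _).mpr hdl
      have h2 : ((l : ℕ) : ZMod d) = ((l - 1 : ℕ) : ZMod d) + 1 := by
        conv_lhs => rw [← Nat.sub_add_cancel hl]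
        push_cast
        ring
      rw [h2, h1, zero_add]
  -- abbreviations
  set A := Abelianization (SemidirectProduct (Multiplicative (ZMod n)) (Multiplicative (ZMod m)) φ)
    with hA
  let ι : Multiplicative (ZMod n) →* A := Abelianization.of.comp inl
  -- the exponent computation
  have h1m : (l : ZMod n) ^ ((1 : ZMod m)).val = (l : ZMod n) := by
    rcases eq_or_lt_of_le (show 1 ≤ m from hm) with h1 | h1
    · have hm1 : m = 1 := h1.symm
      subst hm1
      have hv : (1 : ZMod 1).val = 0 := rfl
      rw [hv, pow_zero]
      rw [pow_one] at hlm
      rw [hlm]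
    · haveI : Fact (1 < m) := ⟨h1⟩
      rw [ZMod.val_one]
      ring
  -- the basic relation in the abelianization
  have hrel : ∀ a : ZMod n, ι (ofAdd ((l : ZMod n) * a)) = ι (ofAdd a) := by
    intro a
    have h := congrArg Abelianization.of
      (inl_aut (φ := φ) (ofAdd (1 : ZMod m)) (ofAdd a))
    rw [hφ, h1m] at h
    have : Abelianization.of (inl (ofAdd ((l : ZMod n) * a)) :
        SemidirectProduct (Multiplicative (ZMod n)) (Multiplicative (ZMod m)) φ)
        = Abelianization.of (inl (ofAdd a)) := by
      rw [h, map_mul, map_mul, map_inv]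
      exact mul_inv_cancel_comm _ _
    exact this
  have hkey : ι (ofAdd ((d : ZMod n))) = 1 := by
    rcases Nat.eq_zero_or_pos l with h0 | hl
    · have hn1 := hl0 h0
      have : ((d : ZMod n)) = 0 := by
        rw [hn1] at *
        exact Subsingleton.elim _ _
      rw [this]
      simpa using map_one ι
    · obtain ⟨u, w, huv⟩ : ∃ u w : ℤ, (d : ℤ) = (n : ℤ) * u + ((l - 1 : ℕ) : ℤ) * w :=
        ⟨_, _, by rw [hd, ← Int.gcd_natCast_natCast, Int.gcd_eq_gcd_ab]⟩
      set v : ZMod n := ((w : ℤ) : ZMod n) with hv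
      have hdn : (d : ZMod n) = (l : ZMod n) * v - v := by
        have h := congrArg (fun z : ℤ => ((z : ZMod n))) huv
        push_cast [Nat.cast_sub hl] at h
        rw [ZMod.natCast_self] at h
        rw [h]
        ring
      rw [hdn, ofAdd_sub, map_div]
      rw [hrel v]
      exact div_self' _
  -- forward map
  let cast' : Multiplicative (ZMod n) →* Multiplicative (ZMod d) :=
    AddMonoidHom.toMultiplicative (ZMod.castHom hdvd (ZMod d)).toAddMonoidHom
  have hcast' : ∀ a : ZMod n, cast' (ofAdd a) = ofAdd (ZMod.castHom hdvd (ZMod d) a) := fun a => rfl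
  let T := Multiplicative (ZMod m) × Multiplicative (ZMod d)
  let f₁ : Multiplicative (ZMod n) →* T := (MonoidHom.inr _ _).comp cast'
  let f₂ : Multiplicative (ZMod m) →* T := MonoidHom.inl _ _
  have hcompat : ∀ g : Multiplicative (ZMod m),
      f₁.comp (φ g).toMonoidHom = (MulAut.conj (f₂ g)).toMonoidHom.comp f₁ := by
    intro g
    refine MonoidHom.ext fun a => ?_
    show f₁ (φ g a) = f₂ g * f₁ a * (f₂ g)⁻¹
    have h1 : φ g a = ofAdd ((l : ZMod n) ^ (g.toAdd).val * a.toAdd) := hφ g.toAdd a.toAdd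
    have h2 : f₁ (φ g a) = f₁ a := by
      rw [h1]
      show (1, cast' (ofAdd ((l : ZMod n) ^ (g.toAdd).val * a.toAdd))) = (1, cast' a)
      have hc2 : cast' (ofAdd ((l : ZMod n) ^ (g.toAdd).val * a.toAdd)) = cast' a := by
        rw [hcast']
        show _ = ofAdd ((ZMod.castHom hdvd (ZMod d)) a.toAdd)
        rw [map_mul, map_pow, map_natCast, hl1, one_pow, one_mul]
      rw [hc2]
    rw [h2, mul_comm (f₂ g), mul_assoc, mul_inv_cancel, mul_one]
  let F : SemidirectProduct (Multiplicative (ZMod n)) (Multiplicative (ZMod m)) φ →* T :=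
    SemidirectProduct.lift f₁ f₂ hcompat
  let Fbar : A →* T := Abelianization.lift F
  -- backward map
  let B1 : Multiplicative (ZMod m) →* A := Abelianization.of.comp inr
  let e : ℤ →+ Additive A := zmultiplesHom (Additive A) (Additive.ofMul (ι (ofAdd (1 : ZMod n))))
  have he : e (d : ℤ) = 0 := by
    show (d : ℤ) • Additive.ofMul (ι (ofAdd (1 : ZMod n))) = 0
    have : (ι (ofAdd (1 : ZMod n))) ^ (d : ℤ) = 1 := by
      rw [← map_zpow, ← ofAdd_zsmul]
      simpa using hkey
    exact this
  let B2 : Multiplicative (ZMod d) →* A :=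
    AddMonoidHom.toMultiplicativeLeft (ZMod.lift d ⟨e, he⟩)
  have hB2 : ∀ k : ℤ, B2 (ofAdd ((k : ZMod d))) = ι (ofAdd ((k : ZMod n))) := by
    intro k
    show Additive.toMul (ZMod.lift d ⟨e, he⟩ ((k : ZMod d))) = _
    rw [ZMod.lift_coe]
    show Additive.toMul ((k : ℤ) • Additive.ofMul (ι (ofAdd (1 : ZMod n)))) = _
    rw [toMul_zsmul]
    show (ι (ofAdd (1 : ZMod n))) ^ k = _
    rw [← map_zpow, ← ofAdd_zsmul, zsmul_one]
  let B : T →* A := B1.coprod B2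
  have hFB : Fbar.comp B = MonoidHom.id T := by
    refine MonoidHom.ext fun p => ?_
    obtain ⟨j, c⟩ := p
    show Fbar (B1 j * B2 c) = (j, c)
    have h1 : Fbar (B1 j) = (j, 1) := by
      show Abelianization.lift F (Abelianization.of (inr j)) = _
      rw [Abelianization.lift_apply_of, SemidirectProduct.lift_inr]
      rfl
    have h2 : Fbar (B2 c) = (1, c) := by
      have hc : c = ofAdd (((c.toAdd.val : ℤ) : ZMod d)) := by
        have hcc : ((c.toAdd.val : ℤ) : ZMod d) = c.toAdd := by
          push_cast
          exact ZMod.natCast_zmod_val _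
        rw [hcc]
        rfl
      rw [hc, hB2]
      show Abelianization.lift F (Abelianization.of (inl (ofAdd ((c.toAdd.val : ℤ) : ZMod n)))) = _
      rw [Abelianization.lift_apply_of, SemidirectProduct.lift_inl]
      show (1, cast' (ofAdd ((c.toAdd.val : ℤ) : ZMod n))) = _
      rw [hcast']
      congr 1
      rw [map_intCast]
    rw [map_mul, h1, h2]
    show (j * 1, 1 * c) = (j, c)
    rw [mul_one, one_mul]
  have hBF : B.comp Fbar = MonoidHom.id A := by
    apply Abelianization.hom_ext
    apply SemidirectProduct.hom_ext
    · refine MonoidHom.ext fun a0 => ?_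
      set a : ZMod n := a0.toAdd with haa
      show B (Fbar (Abelianization.of (inl (ofAdd a)))) = Abelianization.of (inl (ofAdd a))
      have h1 : Fbar (Abelianization.of (inl (ofAdd a))) = (1, cast' (ofAdd a)) := by
        show Abelianization.lift F (Abelianization.of (inl (ofAdd a))) = _
        rw [Abelianization.lift_apply_of, SemidirectProduct.lift_inl]
        rfl
      rw [h1, hcast']
      show B1 1 * B2 (ofAdd (ZMod.castHom hdvd (ZMod d) a)) = _
      rw [map_one, one_mul]
      have ha : (ZMod.castHom hdvd (ZMod d) a) = ((a.val : ℤ) : ZMod d) := by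
        rw [ZMod.castHom_apply, ← ZMod.natCast_val]
        push_cast
        rfl
      rw [ha, hB2]
      have ha2 : ((a.val : ℤ) : ZMod n) = a := by
        push_cast
        exact ZMod.natCast_zmod_val a
      rw [ha2]
      rfl
    · refine MonoidHom.ext fun j => ?_
      show B (Fbar (Abelianization.of (inr j))) = Abelianization.of (inr j)
      have h1 : Fbar (Abelianization.of (inr j)) = (j, 1) := by
        show Abelianization.lift F (Abelianization.of (inr j)) = _
        rw [Abelianization.lift_apply_of, SemidirectProduct.lift_inr]
        rfl
      rw [h1]
      show B1 j * B2 1 = _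
      rw [map_one, mul_one]
      rfl
  exact ⟨MonoidHom.toMulEquiv Fbar B hBF hFB⟩
end

section
/- Let n, m, l be natural numbers with l ≥ 1 and n ∣ l^m - 1, and set Σ = 1 + l + ... + l^(m-1) and r = gcd(n, Σ). Then for all natural numbers i, k, u, w: r divides (i + u*r)*S_(k + w*m) - i*S_k, where S_j = 1 + l + ... + l^(j-1). -/
lemma geom_sum_mul_dvd (l : ℤ) (m w : ℕ) :
    (∑ t ∈ Finset.range m, l ^ t) ∣ ∑ t ∈ Finset.range (w * m), l ^ t := by
  induction w with
  | zero => simp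
  | succ w ih =>
    have hw : (w + 1) * m = w * m + m := by ring
    rw [hw, Finset.sum_range_add]
    refine dvd_add ih ?_
    have : ∑ x ∈ Finset.range m, l ^ (w * m + x)
        = l ^ (w * m) * ∑ x ∈ Finset.range m, l ^ x := by
      rw [Finset.mul_sum]; simp [pow_add]
    rw [this]
    exact Dvd.dvd.mul_left dvd_rfl _

theorem crossed_pairing_well_defined (n m l : ℕ) (hl : 1 ≤ l) (h : n ∣ l ^ m - 1)
    (i k u w : ℕ) :
    (Nat.gcd n (∑ t ∈ Finset.range m, l ^ t) : ℤ) ∣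
      ((i + u * Nat.gcd n (∑ t ∈ Finset.range m, l ^ t)) *
          ∑ t ∈ Finset.range (k + w * m), (l : ℤ) ^ t)
        - i * ∑ t ∈ Finset.range k, (l : ℤ) ^ t := by
  set r : ℤ := (Nat.gcd n (∑ t ∈ Finset.range m, l ^ t) : ℤ) with hr
  have hrSig : r ∣ ∑ t ∈ Finset.range m, (l : ℤ) ^ t := by
    have := Nat.gcd_dvd_right n (∑ t ∈ Finset.range m, l ^ t)
    have := Int.natCast_dvd_natCast.mpr this
    push_cast at this
    exact this
  set S := ∑ t ∈ Finset.range k, (l : ℤ) ^ t with hS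
  set S' := ∑ t ∈ Finset.range (k + w * m), (l : ℤ) ^ t with hS'
  have hsplit : S' = S + (l : ℤ) ^ k * ∑ t ∈ Finset.range (w * m), (l : ℤ) ^ t := by
    rw [hS', Finset.sum_range_add, Finset.mul_sum]
    simp [pow_add, hS]
  have h1 : r ∣ S' - S := by
    rw [hsplit]
    have := hrSig.trans (geom_sum_mul_dvd (l : ℤ) m w)
    simpa using this.mul_left ((l : ℤ) ^ k)
  have key : ((i : ℤ) + u * r) * S' - i * S = i * (S' - S) + r * (u * S') := by ring
  rw [key]
  exact dvd_add (h1.mul_left _) ⟨u * S', rfl⟩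
end
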